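/- arXiv:math/0606709 — 2 statements merged into one kernel-verified Lean document; each statement's English description precedes it below -/
import Mathlib

section
/- Let (X, Y) be an R^2-valued random vector whose distribution is invariant under all rotations of the plane, and suppose P((X,Y) = (0,0)) = 0. Then the ratio X/Y is distributed according to the standard Cauchy distribution. -/
open MeasureTheory ProbabilityTheory Real Set
open scoped NNReal ENNReal

/-- The standard Cauchy distribution on `ℝ`, with density `1 / (π (1 + t²))`
with respect to Lebesgue measure. -/
noncomputable def stdCauchy : Measure ℝ :=
  volume.withDensity fun t => ENNReal.ofReal (1 / (Real.pi * (1 + t ^ 2)))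

instance : Fact (0 < 2 * Real.pi) := ⟨by positivity⟩

lemma volume_image_const_sub_arctan (c : ℝ) {s : Set ℝ} (hs : MeasurableSet s) :
    volume ((fun t => c - Real.arctan t) '' s) = ∫⁻ t in s, ENNReal.ofReal (1 / (1 + t ^ 2)) := by
  have hderiv : ∀ x ∈ s, HasFDerivWithinAt (fun t => c - Real.arctan t)
      ((1 : ℝ →L[ℝ] ℝ).smulRight (-(1 / (1 + x ^ 2)))) s x := fun x _ =>
    (((Real.hasDerivAt_arctan x).const_sub c).hasDerivWithinAt).hasFDerivWithinAt
  have hinj : InjOn (fun t => c - Real.arctan t) s := by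
    intro a _ b _ h
    exact Real.arctan_injective (by dsimp at h; linarith)
  have key := lintegral_image_eq_lintegral_abs_det_fderiv_mul volume hs hderiv hinj 1
  simp only [ContinuousLinearMap.smulRight_one_eq_toSpanSingleton, ContinuousLinearMap.det_toSpanSingleton, Pi.one_apply, mul_one, lintegral_one,
    Measure.restrict_apply_univ] at key
  rw [key]
  refine setLIntegral_congr_fun hs (fun x _ => ?_)
  rw [abs_neg, abs_of_nonneg (by positivity)]

lemma cot_preimage (c : ℝ) (hc : ∀ θ, Real.cos θ / Real.sin θ = Real.tan (c - θ)) (s : Set ℝ) :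
    (fun θ => Real.cos θ / Real.sin θ) ⁻¹' s ∩ Ioo (c - π/2) (c + π/2)
      = (fun t => c - Real.arctan t) '' s := by
  ext θ
  constructor
  · rintro ⟨hθs, h1, h2⟩
    refine ⟨Real.tan (c - θ), by rwa [← hc θ], ?_⟩
    dsimp only
    rw [Real.arctan_tan (by linarith) (by linarith)]; ring
  · rintro ⟨t, ht, rfl⟩
    have h := Real.arctan_mem_Ioo t
    refine ⟨?_, by constructor <;> [linarith [h.2]; linarith [h.1]]⟩
    show Real.cos _ / Real.sin _ ∈ s
    rw [hc]
    have : c - (c - Real.arctan t) = Real.arctan t := by ring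
    rwa [this, Real.tan_arctan]

lemma volume_cot_preimage_Ioc {s : Set ℝ} (hs : MeasurableSet s) :
    volume ((fun θ => Real.cos θ / Real.sin θ) ⁻¹' s ∩ Ioc 0 (2*π))
      = 2 * ∫⁻ t in s, ENNReal.ofReal (1 / (1 + t ^ 2)) := by
  have pre_m : MeasurableSet ((fun θ => Real.cos θ / Real.sin θ) ⁻¹' s) :=
    (Real.measurable_cos.div Real.measurable_sin) hs
  set pre := (fun θ => Real.cos θ / Real.sin θ) ⁻¹' s with hpre
  have h1 : pre ∩ Ioo (π/2 - π/2) (π/2 + π/2) = (fun t => π/2 - Real.arctan t) '' s := by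
    apply cot_preimage
    intro θ
    rw [Real.tan_eq_sin_div_cos, Real.sin_pi_div_two_sub, Real.cos_pi_div_two_sub]
  have h2 : pre ∩ Ioo (3*π/2 - π/2) (3*π/2 + π/2) = (fun t => 3*π/2 - Real.arctan t) '' s := by
    apply cot_preimage
    intro θ
    have : 3*π/2 - θ = (π/2 - θ) + π := by ring
    rw [this, Real.tan_add_pi, Real.tan_eq_sin_div_cos, Real.sin_pi_div_two_sub,
      Real.cos_pi_div_two_sub]
  have e1 : Ioo (π/2 - π/2) (π/2 + π/2) = Ioo (0:ℝ) π := by norm_num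
  have e2 : Ioo (3*π/2 - π/2) (3*π/2 + π/2) = Ioo π (2*π) := by
    rw [show 3*π/2 - π/2 = π by ring, show 3*π/2 + π/2 = 2*π by ring]
  rw [e1] at h1; rw [e2] at h2
  have hπ := Real.pi_pos
  -- split the measure
  have hsub1 : pre ∩ Ioo 0 π ∪ pre ∩ Ioo π (2*π) ⊆ pre ∩ Ioc 0 (2*π) := by
    rintro x (⟨hx, h, h'⟩ | ⟨hx, h, h'⟩) <;> exact ⟨hx, ⟨by linarith, by linarith⟩⟩
  have hsub2 : pre ∩ Ioc 0 (2*π) ⊆ (pre ∩ Ioo 0 π ∪ pre ∩ Ioo π (2*π)) ∪ {π, 2*π} := by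
    rintro x ⟨hx, h, h'⟩
    rcases lt_trichotomy x π with h1 | h1 | h1
    · exact Or.inl (Or.inl ⟨hx, h, h1⟩)
    · exact Or.inr (Or.inl h1)
    · rcases eq_or_lt_of_le h' with h2 | h2
      · exact Or.inr (Or.inr h2)
      · exact Or.inl (Or.inr ⟨hx, h1, h2⟩)
  have hnull : volume ({π, 2*π} : Set ℝ) = 0 := (Set.Finite.insert _ (Set.finite_singleton _)).measure_zero _
  have hdisj : Disjoint (pre ∩ Ioo 0 π) (pre ∩ Ioo π (2*π)) := by
    apply Set.disjoint_left.2
    rintro x ⟨_, _, h⟩ ⟨_, h', _⟩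
    linarith
  have hle : volume (pre ∩ Ioc 0 (2*π))
      ≤ volume (pre ∩ Ioo 0 π ∪ pre ∩ Ioo π (2*π)) := by
    calc volume (pre ∩ Ioc 0 (2*π))
        ≤ volume ((pre ∩ Ioo 0 π ∪ pre ∩ Ioo π (2*π)) ∪ {π, 2*π}) := measure_mono hsub2
      _ ≤ volume (pre ∩ Ioo 0 π ∪ pre ∩ Ioo π (2*π)) + volume ({π, 2*π} : Set ℝ) :=
          measure_union_le _ _
      _ = _ := by rw [hnull, add_zero]
  have heq : volume (pre ∩ Ioc 0 (2*π)) = volume (pre ∩ Ioo 0 π ∪ pre ∩ Ioo π (2*π)) :=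
    le_antisymm hle (measure_mono hsub1)
  rw [heq, measure_union hdisj (pre_m.inter measurableSet_Ioo), h1, h2,
    volume_image_const_sub_arctan _ hs, volume_image_const_sub_arctan _ hs, two_mul]

noncomputable def cotA : AddCircle (2*Real.pi) → ℝ := fun a => Real.Angle.cos a / Real.Angle.sin a

lemma cotA_measurable : Measurable cotA := by
  have h1 : Continuous (fun a : AddCircle (2*Real.pi) => Real.Angle.cos a) :=
    Real.Angle.continuous_cos
  have h2 : Continuous (fun a : AddCircle (2*Real.pi) => Real.Angle.sin a) :=
    Real.Angle.continuous_sin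
  exact h1.measurable.div h2.measurable

lemma cotA_coe (θ : ℝ) : cotA θ = Real.cos θ / Real.sin θ := by
  have h : ((θ : AddCircle (2*Real.pi))) = (θ : Real.Angle) := rfl
  rw [cotA, h, Real.Angle.cos_coe, Real.Angle.sin_coe]

lemma map_volume_cotA :
    (volume : Measure (AddCircle (2*Real.pi))).map cotA
      = volume.withDensity fun t => ENNReal.ofReal (2 / (1 + t ^ 2)) := by
  ext s hs
  rw [Measure.map_apply cotA_measurable hs, withDensity_apply _ hs]
  have hpre : MeasurableSet (cotA ⁻¹' s) := cotA_measurable hs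
  rw [AddCircle.add_projection_respects_measure _ 0 hpre]
  have hset : (QuotientAddGroup.mk ⁻¹' (cotA ⁻¹' s) : Set ℝ)
      = (fun θ => Real.cos θ / Real.sin θ) ⁻¹' s := by
    ext θ
    simp only [mem_preimage]
    rw [show (QuotientAddGroup.mk θ : AddCircle (2*Real.pi)) = (θ : AddCircle (2*Real.pi)) from rfl,
      cotA_coe]
  rw [hset, zero_add, volume_cot_preimage_Ioc hs]
  rw [← lintegral_const_mul 2 (by fun_prop : Measurable fun t => ENNReal.ofReal (1 / (1 + t ^ 2)))]
  refine setLIntegral_congr_fun hs (fun t _ => ?_)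
  rw [← ENNReal.ofReal_ofNat 2, ← ENNReal.ofReal_mul (by norm_num)]
  rw [mul_one_div]

lemma aux_div (a b r : ℝ) (hr : r ≠ 0) : (a/r)/(b/r) = a/b := by
  rw [div_div_div_comm, div_self hr, div_one]

/-- If the law of the `ℝ²`-valued random vector `(X, Y)` is invariant under all
rotations of the plane and `P((X,Y) = (0,0)) = 0`, then `X / Y` has the standard Cauchy
distribution. -/
theorem rotation_invariant_ratio_cauchy
    {Ω : Type*} [MeasurableSpace Ω] (P : Measure Ω) [IsProbabilityMeasure P]
    (X Y : Ω → ℝ) (hX : Measurable X) (hY : Measurable Y)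
    (hrot : ∀ φ : ℝ,
      IdentDistrib
        (fun ω => (Real.cos φ * X ω + Real.sin φ * Y ω,
                   -Real.sin φ * X ω + Real.cos φ * Y ω))
        (fun ω => (X ω, Y ω)) P P)
    (h0 : P {ω | X ω = 0 ∧ Y ω = 0} = 0) :
    P.map (fun ω => X ω / Y ω) = stdCauchy := by
  classical
  set Z : Ω → ℂ := fun ω => (X ω : ℂ) + (Y ω : ℂ) * Complex.I with hZdef
  have hZ : Measurable Z :=
    (Complex.measurable_ofReal.comp hX).add
      ((Complex.measurable_ofReal.comp hY).mul_const Complex.I)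
  have hZ0 : ∀ ω, Z ω ≠ 0 ↔ ¬(X ω = 0 ∧ Y ω = 0) := by
    intro ω
    rw [not_iff_not]
    constructor
    · intro h
      constructor
      · simpa [hZdef] using congrArg Complex.re h
      · simpa [hZdef] using congrArg Complex.im h
    · rintro ⟨h1, h2⟩; simp [hZdef, h1, h2]
  set Θ : Ω → AddCircle (2*Real.pi) :=
    fun ω => ((Complex.arg (Z ω) : ℝ) : AddCircle (2*Real.pi)) with hΘdef
  have hΘ : Measurable Θ := AddCircle.measurable_mk'.comp (Complex.measurable_arg.comp hZ)
  set ν := P.map Θ with hνdef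
  haveI : IsProbabilityMeasure ν := Measure.isProbabilityMeasure_map hΘ.aemeasurable
  -- invariance of ν under rotations
  have hinv : ∀ c : ℝ, ν.map (fun a => a + ((c : ℝ) : AddCircle (2*Real.pi))) = ν := by
    intro c
    set w : ℂ := (Real.cos c : ℂ) + (Real.sin c : ℂ) * Complex.I with hwdef
    have hw0 : w ≠ 0 := by
      intro h
      have h1 : Real.cos c = 0 := by simpa [hwdef, Complex.cos_ofReal_re] using congrArg Complex.re h
      have h2 : Real.sin c = 0 := by simpa [hwdef, Complex.sin_ofReal_re] using congrArg Complex.im h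
      nlinarith [Real.sin_sq_add_cos_sq c]
    have hargw : ((Complex.arg w : ℝ) : AddCircle (2*Real.pi)) = ((c : ℝ) : AddCircle (2*Real.pi)) := by
      have h := Complex.arg_cos_add_sin_mul_I_coe_angle (c : Real.Angle)
      rw [Real.Angle.cos_coe, Real.Angle.sin_coe] at h
      exact h
    set R : Ω → ℝ × ℝ := fun ω =>
      (Real.cos (-c) * X ω + Real.sin (-c) * Y ω,
       -Real.sin (-c) * X ω + Real.cos (-c) * Y ω) with hRdef
    set Am : ℝ × ℝ → AddCircle (2*Real.pi) :=
      fun p => ((Complex.arg ((p.1 : ℂ) + (p.2 : ℂ) * Complex.I) : ℝ) : AddCircle (2*Real.pi))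
      with hAmdef
    have hAm : Measurable Am :=
      AddCircle.measurable_mk'.comp (Complex.measurable_arg.comp
        ((Complex.measurable_ofReal.comp measurable_fst).add
          ((Complex.measurable_ofReal.comp measurable_snd).mul_const Complex.I)))
    have hmapeq : P.map (Am ∘ R) = ν := ((hrot (-c)).comp hAm).map_eq
    have hae : (Am ∘ R) =ᵐ[P] fun ω => Θ ω + ((c : ℝ) : AddCircle (2*Real.pi)) := by
      have hsub : {ω | ¬ (Am ∘ R) ω = Θ ω + ((c : ℝ) : AddCircle (2*Real.pi))}
          ⊆ {ω | X ω = 0 ∧ Y ω = 0} := by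
        intro ω hω
        by_contra hc
        apply hω
        have hz : Z ω ≠ 0 := (hZ0 ω).2 hc
        have hprod : ((R ω).1 : ℂ) + ((R ω).2 : ℂ) * Complex.I = w * Z ω := by
          rw [hRdef, hwdef, hZdef]
          push_cast [Real.cos_neg, Real.sin_neg]
          apply Complex.ext <;> simp <;> ring
        show Am (R ω) = _
        rw [hAmdef]
        simp only
        rw [hprod]
        have harg : ((Complex.arg (w * Z ω) : ℝ) : AddCircle (2*Real.pi))
            = ((Complex.arg w : ℝ) : AddCircle (2*Real.pi)) + ((Complex.arg (Z ω) : ℝ) : AddCircle (2*Real.pi)) :=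
          Complex.arg_mul_coe_angle hw0 hz
        rw [harg, hargw, add_comm]
      exact (measure_mono_null hsub h0 : _)
    have : P.map (fun ω => Θ ω + ((c : ℝ) : AddCircle (2*Real.pi))) = ν := by
      rw [← Measure.map_congr hae]; exact hmapeq
    rw [hνdef, Measure.map_map (measurable_add_const _) hΘ]
    exact this
  haveI : ν.IsAddLeftInvariant := by
    constructor
    intro g
    obtain ⟨c, rfl⟩ := QuotientAddGroup.mk_surjective g
    have he : (fun a : AddCircle (2*Real.pi) => (c : AddCircle (2*Real.pi)) + a)
        = fun a => a + (c : AddCircle (2*Real.pi)) := funext fun a => add_comm _ _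
    show ν.map (fun a => (c : AddCircle (2*Real.pi)) + a) = ν
    rw [he]
    exact hinv c
  -- ν is the uniform measure (up to scalar)
  set κ : ℝ≥0 := ν.addHaarScalarFactor (volume : Measure (AddCircle (2*Real.pi))) with hκdef
  have hν : ν = (κ : ℝ≥0∞) • (volume : Measure (AddCircle (2*Real.pi))) :=
    Measure.isAddLeftInvariant_eq_smul ν volume
  have hκ1 : (κ : ℝ≥0∞) * ENNReal.ofReal (2*Real.pi) = 1 := by
    have h1 : ν univ = 1 := measure_univ
    rw [hν, Measure.smul_apply, smul_eq_mul, AddCircle.measure_univ] at h1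
    exact h1
  have hκ2 : (κ : ℝ≥0∞) = (ENNReal.ofReal (2*Real.pi))⁻¹ := by
    have hne : ENNReal.ofReal (2*Real.pi) ≠ 0 := by
      rw [← ENNReal.ofReal_zero, Ne, ENNReal.ofReal_eq_ofReal_iff (by positivity) le_rfl]
      positivity
    have hnt : ENNReal.ofReal (2*Real.pi) ≠ ⊤ := ENNReal.ofReal_ne_top
    calc (κ : ℝ≥0∞) = (κ : ℝ≥0∞) * (ENNReal.ofReal (2*Real.pi) * (ENNReal.ofReal (2*Real.pi))⁻¹) := by
          rw [ENNReal.mul_inv_cancel hne hnt, mul_one]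
      _ = ((κ : ℝ≥0∞) * ENNReal.ofReal (2*Real.pi)) * (ENNReal.ofReal (2*Real.pi))⁻¹ := by ring
      _ = (ENNReal.ofReal (2*Real.pi))⁻¹ := by rw [hκ1, one_mul]
  -- the ratio equals cotA ∘ Θ a.e.
  have hae2 : (fun ω => X ω / Y ω) =ᵐ[P] (cotA ∘ Θ) := by
    have hsub : {ω | ¬ X ω / Y ω = (cotA ∘ Θ) ω} ⊆ {ω | X ω = 0 ∧ Y ω = 0} := by
      intro ω hω
      by_contra hc
      apply hω
      have hz : Z ω ≠ 0 := (hZ0 ω).2 hc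
      have habs : ‖Z ω‖ ≠ 0 := norm_ne_zero_iff.mpr hz
      show X ω / Y ω = cotA (Θ ω)
      rw [hΘdef]
      simp only
      rw [cotA_coe, Complex.cos_arg hz, Complex.sin_arg, aux_div _ _ _ habs]
      have hre : (Z ω).re = X ω := by simp [hZdef]
      have him : (Z ω).im = Y ω := by simp [hZdef]
      rw [hre, him]
    exact (measure_mono_null hsub h0 : _)
  calc P.map (fun ω => X ω / Y ω) = P.map (cotA ∘ Θ) := Measure.map_congr hae2
    _ = ν.map cotA := (Measure.map_map cotA_measurable hΘ).symm
    _ = (κ : ℝ≥0∞) • (volume : Measure (AddCircle (2*Real.pi))).map cotA := by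
        rw [hν, Measure.map_smul]
    _ = (κ : ℝ≥0∞) • volume.withDensity (fun t => ENNReal.ofReal (2 / (1 + t ^ 2))) := by
        rw [map_volume_cotA]
    _ = stdCauchy := by
        rw [stdCauchy]
        ext s hs
        rw [Measure.smul_apply, withDensity_apply _ hs, withDensity_apply _ hs, smul_eq_mul,
          ← lintegral_const_mul _ (by fun_prop : Measurable fun t => ENNReal.ofReal (2 / (1 + t ^ 2)))]
        refine setLIntegral_congr_fun hs (fun t _ => ?_)
        rw [hκ2, ← ENNReal.div_eq_inv_mul, ← ENNReal.ofReal_div_of_pos (by positivity)]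
        congr 1
        rw [div_div, div_eq_div_iff (by positivity) (by positivity)]
        ring
end

section
/- Let Z be a complex random variable such that for every α ∈ R, e^{iα} Z has the same distribution as Z, and P(Z = 0) = 0. Then Re(Z)/Im(Z) has the standard Cauchy distribution and Re(Z) has the same distribution as Im(Z). -/
open MeasureTheory ProbabilityTheory Set Real

lemma stdCauchy_Iic (x : ℝ) :
    stdCauchy (Iic x) = ENNReal.ofReal (π⁻¹ * (arctan x + π / 2)) := by
  rw [stdCauchy, withDensity_apply _ measurableSet_Iic]
  have hint : IntegrableOn (fun t : ℝ => 1 / (π * (1 + t ^ 2))) (Iic x) := by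
    simp_rw [one_div, mul_inv]
    exact (integrable_inv_one_add_sq.integrableOn).const_mul _
  rw [← ofReal_integral_eq_lintegral_ofReal hint
    (Filter.Eventually.of_forall fun t => by positivity)]
  congr 1
  simp_rw [one_div, mul_inv]
  rw [MeasureTheory.integral_const_mul, integral_Iic_inv_one_add_sq]

lemma stdCauchy_univ : stdCauchy (univ : Set ℝ) = 1 := by
  rw [stdCauchy, withDensity_apply _ MeasurableSet.univ, Measure.restrict_univ]
  have hint : Integrable (fun t : ℝ => 1 / (π * (1 + t ^ 2))) := by
    simp_rw [one_div, mul_inv]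
    exact integrable_inv_one_add_sq.const_mul _
  rw [← ofReal_integral_eq_lintegral_ofReal hint
    (Filter.Eventually.of_forall fun t => by positivity)]
  simp_rw [one_div, mul_inv]
  rw [MeasureTheory.integral_const_mul, integral_univ_inv_one_add_sq,
    inv_mul_cancel₀ pi_ne_zero, ENNReal.ofReal_one]

instance : IsProbabilityMeasure stdCauchy := ⟨stdCauchy_univ⟩

lemma cot_le_iff_pos {x θ : ℝ} (hθ : θ ∈ Ioo 0 π) :
    cos θ / sin θ ≤ x ↔ π / 2 - arctan x ≤ θ := by
  have h1 : π / 2 - θ ∈ Ioo (-(π/2)) (π/2) := by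
    constructor <;> [linarith [hθ.2]; linarith [hθ.1]]
  have h2 : arctan x ∈ Ioo (-(π/2)) (π/2) :=
    ⟨neg_pi_div_two_lt_arctan x, arctan_lt_pi_div_two x⟩
  have key : cos θ / sin θ = tan (π / 2 - θ) := by
    rw [tan_eq_sin_div_cos, sin_pi_div_two_sub, cos_pi_div_two_sub]
  rw [key]
  constructor
  · intro h
    by_contra hc
    push_neg at hc
    have : arctan x < π / 2 - θ := by linarith
    have := strictMonoOn_tan.lt_iff_lt h2 h1 |>.2 this
    rw [tan_arctan] at this
    linarith
  · intro h
    have : π / 2 - θ ≤ arctan x := by linarith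
    calc tan (π/2 - θ) ≤ tan (arctan x) := by
          rcases eq_or_lt_of_le this with he | hl
          · rw [he]
          · exact le_of_lt (strictMonoOn_tan.lt_iff_lt h1 h2 |>.2 hl)
      _ = x := tan_arctan x

lemma cot_le_iff_neg {x θ : ℝ} (hθ : θ ∈ Ioo (-π) 0) :
    cos θ / sin θ ≤ x ↔ -(π / 2) - arctan x ≤ θ := by
  have hθ' : θ + π ∈ Ioo 0 π := ⟨by linarith [hθ.1], by linarith [hθ.2]⟩
  have : cos θ / sin θ = cos (θ + π) / sin (θ + π) := by
    rw [cos_add_pi, sin_add_pi, neg_div_neg_eq]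
  rw [this, cot_le_iff_pos hθ']
  constructor <;> intro h <;> linarith

lemma cot_measure (x : ℝ) :
    volume ({θ : ℝ | cos θ / sin θ ≤ x} ∩ Ioc (-π) π)
      = ENNReal.ofReal (π + 2 * arctan x) := by
  set U : Set ℝ := Ico (-(π/2) - arctan x) 0 ∪ Ico (π/2 - arctan x) π with hU
  have har1 : -(π/2) < arctan x := neg_pi_div_two_lt_arctan x
  have har2 : arctan x < π/2 := arctan_lt_pi_div_two x
  have hUS : U ⊆ {θ : ℝ | cos θ / sin θ ≤ x} ∩ Ioc (-π) π := by
    rintro θ (⟨h1, h2'⟩ | ⟨h1, h2'⟩)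
    · have hmem : θ ∈ Ioo (-π) 0 := ⟨by linarith, h2'⟩
      exact ⟨(cot_le_iff_neg hmem).2 (by linarith), hmem.1, by linarith [pi_pos]⟩
    · have hmem : θ ∈ Ioo 0 π := ⟨by linarith, h2'⟩
      exact ⟨(cot_le_iff_pos hmem).2 (by linarith), by linarith [pi_pos], le_of_lt hmem.2⟩
  have hSU : {θ : ℝ | cos θ / sin θ ≤ x} ∩ Ioc (-π) π ⊆ U ∪ {0, π} := by
    rintro θ ⟨hc, hlo, hhi⟩
    rcases lt_trichotomy θ 0 with hn | rfl | hp
    · exact Or.inl (Or.inl ⟨(cot_le_iff_neg ⟨hlo, hn⟩).1 hc, hn⟩)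
    · exact Or.inr (Or.inl rfl)
    · rcases eq_or_lt_of_le hhi with he | hl
      · exact Or.inr (Or.inr he)
      · exact Or.inl (Or.inr ⟨(cot_le_iff_pos ⟨hp, hl⟩).1 hc, hl⟩)
  have hnull : volume ({0, π} : Set ℝ) = 0 :=
    (Set.toFinite _).measure_zero volume
  have hUvol : volume U = ENNReal.ofReal (π + 2 * arctan x) := by
    have hdisj : Disjoint (Ico (-(π/2) - arctan x) 0) (Ico (π/2 - arctan x) π) := by
      apply Set.disjoint_left.2
      rintro θ ⟨_, h2'⟩ ⟨h3, _⟩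
      linarith
    rw [hU, measure_union hdisj measurableSet_Ico, Real.volume_Ico, Real.volume_Ico,
      ← ENNReal.ofReal_add (by linarith) (by linarith)]
    congr 1
    ring
  apply le_antisymm
  · calc volume ({θ : ℝ | cos θ / sin θ ≤ x} ∩ Ioc (-π) π) ≤ volume (U ∪ {0, π}) :=
        measure_mono hSU
      _ ≤ volume U + volume ({0, π} : Set ℝ) := measure_union_le _ _
      _ = ENNReal.ofReal (π + 2 * arctan x) := by rw [hnull, hUvol, add_zero]
  · rw [← hUvol]; exact measure_mono hUS

lemma map_cot :
    ((ENNReal.ofReal (2*π))⁻¹ • (volume.restrict (Ioc (-π) π))).map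
      (fun θ : ℝ => cos θ / sin θ) = stdCauchy := by
  have hcot : Measurable fun θ : ℝ => cos θ / sin θ :=
    (Real.continuous_cos.measurable).div (Real.continuous_sin.measurable)
  symm
  refine Measure.ext_of_Iic stdCauchy _ fun x => ?_
  rw [stdCauchy_Iic, Measure.map_smul, Measure.smul_apply,
    Measure.map_apply hcot measurableSet_Iic,
    Measure.restrict_apply' measurableSet_Ioc]
  have hpre : (fun θ : ℝ => cos θ / sin θ) ⁻¹' (Iic x) = {θ : ℝ | cos θ / sin θ ≤ x} := rfl
  rw [hpre, cot_measure, smul_eq_mul,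
    ← ENNReal.ofReal_inv_of_pos (by positivity),
    ← ENNReal.ofReal_mul (by positivity)]
  congr 1
  have hπ : π ≠ 0 := pi_ne_zero
  field_simp
  ring

lemma coe_arg_exp_mul_I (α : ℝ) :
    ((Complex.arg (Complex.exp (α * Complex.I)) : ℝ) : AddCircle (2*π)) =
      (α : AddCircle (2*π)) := by
  rw [Complex.arg_exp_mul_I, ← Real.Angle.toReal_coe α]
  exact Real.Angle.coe_toReal _

lemma coe_arg_mul (α : ℝ) {z : ℂ} (hz : z ≠ 0) :
    ((Complex.arg (Complex.exp (α * Complex.I) * z) : ℝ) : AddCircle (2*π)) =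
      (α : AddCircle (2*π)) + ((Complex.arg z : ℝ) : AddCircle (2*π)) := by
  have h1 : ((Complex.arg (Complex.exp (α * Complex.I) * z) : ℝ) : AddCircle (2*π)) =
      ((Complex.arg (Complex.exp (α * Complex.I)) : ℝ) : AddCircle (2*π)) +
        ((Complex.arg z : ℝ) : AddCircle (2*π)) :=
    Complex.arg_mul_coe_angle (Complex.exp_ne_zero _) hz
  rw [h1, coe_arg_exp_mul_I]

lemma invariant_eq_smul_volume [Fact (0 < 2*π)] (μ : Measure (AddCircle (2*π)))
    [IsProbabilityMeasure μ]
    [μ.IsAddLeftInvariant] : μ = (ENNReal.ofReal (2*π))⁻¹ • volume := by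
  have h := Measure.addHaarMeasure_unique μ
    (⊤ : TopologicalSpace.PositiveCompacts (AddCircle (2*π)))
  have hvol : (volume : Measure (AddCircle (2*π))) =
      ENNReal.ofReal (2*π) • Measure.addHaarMeasure ⊤ := rfl
  have hμtop : μ (⊤ : TopologicalSpace.PositiveCompacts (AddCircle (2*π))) = 1 := by
    rw [TopologicalSpace.PositiveCompacts.coe_top]; exact measure_univ
  rw [h, hvol, smul_smul, hμtop,
    ENNReal.inv_mul_cancel (by simp [Real.pi_pos]) ENNReal.ofReal_ne_top, one_smul]

/-- If `Z` is a complex random variable with `e^{iα} Z =d Z` for every real `α`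
and `P(Z = 0) = 0`, then `Re Z / Im Z` has the standard Cauchy distribution and
`Re Z =d Im Z`. -/
theorem phase_invariant_ratio_cauchy
    {Ω : Type*} [MeasurableSpace Ω] (P : Measure Ω) [IsProbabilityMeasure P]
    (Z : Ω → ℂ) (hZ : Measurable Z)
    (hrot : ∀ α : ℝ, IdentDistrib (fun ω => Complex.exp (α * Complex.I) * Z ω) Z P P)
    (h0 : P {ω | Z ω = 0} = 0) :
    P.map (fun ω => (Z ω).re / (Z ω).im) = stdCauchy ∧
      IdentDistrib (fun ω => (Z ω).re) (fun ω => (Z ω).im) P P := by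
  haveI : Fact (0 < 2*π) := ⟨by positivity⟩
  -- the angle random variable
  set f : ℂ → AddCircle (2*π) := fun z => ((Complex.arg z : ℝ) : AddCircle (2*π)) with hf
  have hfm : Measurable f := AddCircle.measurable_mk'.comp Complex.measurable_arg
  set g : Ω → AddCircle (2*π) := fun ω => f (Z ω) with hgdef
  have hg : Measurable g := hfm.comp hZ
  have hZ0 : ∀ᵐ ω ∂P, Z ω ≠ 0 := by
    rw [ae_iff]
    simpa using h0
  haveI : IsProbabilityMeasure (P.map g) := Measure.isProbabilityMeasure_map hg.aemeasurable
  haveI : (P.map g).IsAddLeftInvariant := by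
    constructor
    intro a
    obtain ⟨α, rfl⟩ := QuotientAddGroup.mk_surjective a
    rw [Measure.map_map (measurable_const_add _) hg]
    have hae : ((fun x => (α : AddCircle (2*π)) + x) ∘ g) =ᵐ[P]
        (fun ω => f (Complex.exp (α * Complex.I) * Z ω)) := by
      filter_upwards [hZ0] with ω hω
      exact (coe_arg_mul α hω).symm
    rw [Measure.map_congr hae]
    exact ((hrot α).comp hfm).map_eq
  have hginv : P.map g = (ENNReal.ofReal (2*π))⁻¹ • volume := invariant_eq_smul_volume _
  -- the real-valued angle
  have hr : Measurable (AddCircle.liftIoc (2*π) (-π) (id : ℝ → ℝ)) :=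
    measurable_subtype_coe.comp (AddCircle.measurableEquivIoc (2*π) (-π)).measurable
  have hT : -π + 2*π = π := by ring
  have harg : (fun ω => Complex.arg (Z ω)) = (AddCircle.liftIoc (2*π) (-π) id) ∘ g := by
    funext ω
    symm
    have hmem : Complex.arg (Z ω) ∈ Ioc (-π) (-π + 2*π) := by
      rw [hT]; exact Complex.arg_mem_Ioc _
    exact AddCircle.liftIoc_coe_apply hmem
  have hmapArg : P.map (fun ω => Complex.arg (Z ω)) =
      (ENNReal.ofReal (2*π))⁻¹ • volume.restrict (Ioc (-π) π) := by
    rw [harg, ← Measure.map_map hr hg, hginv, Measure.map_smul]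
    congr 1
    have hmp := AddCircle.measurePreserving_mk (2*π) (-π)
    rw [← hmp.map_eq, Measure.map_map hr AddCircle.measurable_mk']
    have hae : (AddCircle.liftIoc (2*π) (-π) id) ∘ ((↑) : ℝ → AddCircle (2*π))
        =ᵐ[volume.restrict (Ioc (-π) (-π + 2*π))] id := by
      refine (ae_restrict_iff' measurableSet_Ioc).2 (Filter.Eventually.of_forall fun θ hθ => ?_)
      exact AddCircle.liftIoc_coe_apply hθ
    rw [Measure.map_congr hae, Measure.map_id, hT]
  constructor
  · -- the Cauchy part
    have hcot : Measurable fun θ : ℝ => cos θ / sin θ :=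
      (Real.continuous_cos.measurable).div (Real.continuous_sin.measurable)
    have hfun : (fun ω => (Z ω).re / (Z ω).im) =
        (fun θ : ℝ => cos θ / sin θ) ∘ (fun ω => Complex.arg (Z ω)) := by
      funext ω
      by_cases hz : Z ω = 0
      · simp [hz]
      · show (Z ω).re / (Z ω).im = cos (Complex.arg (Z ω)) / sin (Complex.arg (Z ω))
        rw [Complex.cos_arg hz, Complex.sin_arg, div_div_div_comm,
          div_self (norm_ne_zero_iff.mpr hz), div_one]
    have harg2 : Measurable (fun ω => Complex.arg (Z ω)) := Complex.measurable_arg.comp hZ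
    rw [hfun, ← Measure.map_map hcot harg2, hmapArg, map_cot]
  · -- Re Z =d Im Z
    have hexp : Complex.exp ((↑(-(π/2) : ℝ) : ℂ) * Complex.I) = -Complex.I := by
      rw [Complex.exp_mul_I, ← Complex.ofReal_cos, ← Complex.ofReal_sin]
      simp [Real.cos_pi_div_two, Real.sin_pi_div_two]
    have hfun2 : (fun ω => (Complex.exp ((↑(-(π/2) : ℝ) : ℂ) * Complex.I) * Z ω).re) =
        (fun ω => (Z ω).im) := by
      funext ω
      rw [hexp]
      simp
    have h2 : IdentDistrib (fun ω => (Z ω).re)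
        (fun ω => (Complex.exp ((↑(-(π/2) : ℝ) : ℂ) * Complex.I) * Z ω).re) P P :=
      ((hrot (-(π/2))).comp Complex.measurable_re).symm
    rw [hfun2] at h2
    exact h2
end
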